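/- arXiv:1905.02032 — 2 statements merged into one kernel-verified Lean document; each statement's English description precedes it below -/
import Mathlib

section
/- If a and b are a pair of exact zero divisors in a commutative ring R, then the natural biduality map R/(a) → Hom_R(Hom_R(R/(a), R), R) is an isomorphism. -/
/-!
Multiplication by `b` gives a functional `ψ` on `R ⧸ (a)`. It generates the dual: a functional `φ`
is determined by `φ 1`, which is killed by `a` and hence equals `e * b`, so `φ = e • ψ`. Since
`ann b = (a)`, `ψ` is injective, so evaluation is injective. A functional `F` on the dual is
determined by `F ψ`, again killed by `a`, so `F ψ = c * b = ψ c` and `F` is evaluation at `c`.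
-/

theorem Module.Dual.eval_injective_of_injective {R M : Type*} [CommRing R] [AddCommGroup M]
    [Module R M] {ψ : Module.Dual R M} (hψ : Function.Injective ψ) :
    Function.Injective (Module.Dual.eval R M) :=
  fun _ _ h => hψ (LinearMap.congr_fun h ψ)

theorem Module.Dual.eval_surjective_of_forall_eq_smul {R M : Type*} [CommRing R]
    [AddCommGroup M] [Module R M] {ψ : Module.Dual R M}
    (hψ : ∀ φ : Module.Dual R M, ∃ e : R, φ = e • ψ)
    (hrange : ∀ F : Module.Dual R (Module.Dual R M), F ψ ∈ Set.range ψ) :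
    Function.Surjective (Module.Dual.eval R M) := by
  intro F
  obtain ⟨m, hm⟩ := hrange F
  refine ⟨m, LinearMap.ext fun φ => ?_⟩
  obtain ⟨e, rfl⟩ := hψ φ
  simp [hm]

namespace Ideal.Quotient

variable {R : Type*} [CommRing R] {a b : R}

def mulDual (hab : a * b = 0) : Module.Dual R (R ⧸ Ideal.span {a}) :=
  Submodule.liftQ _ (LinearMap.toSpanSingleton R R b)
    ((Ideal.span_singleton_le_iff_mem _).mpr (by simp [hab]))

@[simp]
theorem mulDual_mk (hab : a * b = 0) (x : R) : mulDual hab (mk _ x) = x * b := rfl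

theorem mulDual_injective (hab : a * b = 0) (hba : ∀ x : R, b * x = 0 → x ∈ Ideal.span {a}) :
    Function.Injective (mulDual hab) := by
  rw [injective_iff_map_eq_zero]
  intro q hq
  obtain ⟨x, rfl⟩ := mk_surjective q
  rw [mulDual_mk, mul_comm] at hq
  exact eq_zero_iff_mem.mpr (hba x hq)

theorem dual_mk (φ : Module.Dual R (R ⧸ Ideal.span {a})) (x : R) :
    φ (mk _ x) = x * φ (mk _ 1) := by
  rw [← smul_eq_mul, ← map_smul, Algebra.smul_def, algebraMap_eq, ← map_mul, mul_one]

theorem mul_dual_mk_one (φ : Module.Dual R (R ⧸ Ideal.span {a})) : a * φ (mk _ 1) = 0 := by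
  rw [← dual_mk, eq_zero_iff_mem.mpr (Ideal.mem_span_singleton_self a), map_zero]

theorem exists_eq_smul_mulDual (hab : a * b = 0) (hann : ∀ x : R, a * x = 0 → x ∈ Ideal.span {b})
    (φ : Module.Dual R (R ⧸ Ideal.span {a})) : ∃ e : R, φ = e • mulDual hab := by
  obtain ⟨e, he⟩ := Ideal.mem_span_singleton'.mp (hann _ (mul_dual_mk_one φ))
  refine ⟨e, LinearMap.ext fun q => ?_⟩
  obtain ⟨x, rfl⟩ := mk_surjective q
  rw [dual_mk, LinearMap.smul_apply, mulDual_mk, smul_eq_mul, ← he]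
  ring

theorem mul_apply_mulDual (hab : a * b = 0)
    (F : Module.Dual R (Module.Dual R (R ⧸ Ideal.span {a}))) : a * F (mulDual hab) = 0 := by
  have : a • mulDual hab = 0 := LinearMap.ext fun q => by
    obtain ⟨x, rfl⟩ := mk_surjective q
    simp [mul_left_comm a, hab]
  rw [← smul_eq_mul, ← map_smul, this, map_zero]

end Ideal.Quotient

/-- If `a, b` are a pair of exact zero divisors in `R`, then the natural
biduality map `R/(a) → Hom_R(Hom_R(R/(a), R), R)` is an isomorphism. -/
theorem stmt2 (R : Type*) [CommRing R] (a b : R)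
    (hab : ∀ x : R, a * x = 0 ↔ x ∈ Ideal.span {b})
    (hba : ∀ x : R, b * x = 0 ↔ x ∈ Ideal.span {a}) :
    Function.Bijective (Module.Dual.eval R (R ⧸ Ideal.span {a})) := by
  have hab0 : a * b = 0 := (hab b).mpr (Ideal.mem_span_singleton_self b)
  refine ⟨Module.Dual.eval_injective_of_injective
      (Ideal.Quotient.mulDual_injective hab0 fun x => (hba x).mp),
    Module.Dual.eval_surjective_of_forall_eq_smul
      (Ideal.Quotient.exists_eq_smul_mulDual hab0 fun x => (hab x).mp) fun F => ?_⟩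
  obtain ⟨c, hc⟩ :=
    Ideal.mem_span_singleton'.mp ((hab _).mp (Ideal.Quotient.mul_apply_mulDual hab0 F))
  exact ⟨Ideal.Quotient.mk _ c, hc⟩
end

section
/- Let R be a commutative ring and 𝔞, 𝔟 ideals with 𝔞·𝔟 = (0), 𝔞 ∩ 𝔟 = (0), and 𝔪 = 𝔞 + 𝔟. Suppose u ∈ 𝔞, v ∈ 𝔟, and there exist nonzero elements u' ∈ 𝔞, v' ∈ 𝔟 with u·u' = 0, v·v' = 0, and 𝔪·u' = 𝔪·v' = 0. If R is local with maximal ideal 𝔪 and every element of ann_R(u+v) lies in 𝔪, then ann_R(u+v) is not a principal ideal. -/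
/-!
Write the generator as `w = x + y` with `x ∈ 𝔞`, `y ∈ 𝔟`. Since `𝔞 ∩ 𝔟 = 0`, the multiples
`u' ∈ 𝔞` and `v' ∈ 𝔟` of `w` are multiples of `x` and of `y` respectively, so `x, y ≠ 0`.
Since `𝔞𝔟 = 0`, `w (u + v) = x u + y v` splits into components, so `x` itself annihilates
`u + v` and `x = c w`. Then `(1 - c) x = c y ∈ 𝔞 ∩ 𝔟` vanishes, and as `R` is local one of
`c`, `1 - c` is a unit, forcing `y = 0` or `x = 0`.
-/

namespace Ideal

variable {R : Type*} [CommRing R] {a b : Ideal R} {x y : R}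

theorem mul_eq_zero_of_mul_eq_bot (hab : a * b = ⊥) {p q : R} (hp : p ∈ a) (hq : q ∈ b) :
    p * q = 0 := by
  simpa [hab] using mul_mem_mul hp hq

theorem mem_span_singleton_left_of_mem_span_singleton_add (hdisj : Disjoint a b)
    (hx : x ∈ a) (hy : y ∈ b) {p : R} (hp : p ∈ a) (hpxy : p ∈ span {x + y}) :
    p ∈ span {x} := by
  obtain ⟨r, rfl⟩ := mem_span_singleton'.1 hpxy
  have hry : r * y = 0 :=
    Submodule.disjoint_def'.1 hdisj.symm _ (mul_mem_left b r hy) (r * (x + y) - r * x)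
      (sub_mem hp (mul_mem_left a r hx)) (by ring)
  rw [mul_add, hry, add_zero]
  exact mul_mem_left _ r (mem_span_singleton_self x)

theorem mul_add_eq_zero_of_add_mul_add_eq_zero (hab : a * b = ⊥) (hdisj : Disjoint a b)
    (hx : x ∈ a) (hy : y ∈ b) {u v : R} (hu : u ∈ a) (hv : v ∈ b)
    (h : (x + y) * (u + v) = 0) : x * (u + v) = 0 := by
  have hxv := mul_eq_zero_of_mul_eq_bot hab hx hv
  have hyu : y * u = 0 := mul_comm u y ▸ mul_eq_zero_of_mul_eq_bot hab hu hy
  have hxu : x * u = 0 :=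
    Submodule.disjoint_def'.1 hdisj _ (mul_mem_right u a hx) (-(y * v))
      (neg_mem (mul_mem_right v b hy)) (by linear_combination h - hxv - hyu)
  rw [mul_add, hxu, hxv, add_zero]

theorem eq_zero_or_eq_zero_of_mem_span_singleton_add [IsLocalRing R] (hdisj : Disjoint a b)
    (hx : x ∈ a) (hy : y ∈ b) (h : x ∈ span {x + y}) : x = 0 ∨ y = 0 := by
  obtain ⟨c, hc⟩ := mem_span_singleton'.1 h
  have hx0 : (1 - c) * x = 0 :=
    Submodule.disjoint_def'.1 hdisj _ (mul_mem_left a _ hx) (c * y) (mul_mem_left b c hy)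
      (by linear_combination -hc)
  have hy0 : c * y = 0 := by linear_combination hc + hx0
  rcases IsLocalRing.isUnit_or_isUnit_one_sub_self c with hcu | hcu
  · exact Or.inr (hcu.mul_right_eq_zero.1 hy0)
  · exact Or.inl (hcu.mul_right_eq_zero.1 hx0)

end Ideal

open Ideal in
theorem stmt13_general (R : Type*) [CommRing R] [IsLocalRing R] (a b : Ideal R)
    (hab : a * b = ⊥) (hint : a ⊓ b = ⊥)
    (hm : IsLocalRing.maximalIdeal R = a ⊔ b)
    (u v u' v' : R) (hu : u ∈ a) (hv : v ∈ b) (hu' : u' ∈ a) (hv' : v' ∈ b)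
    (hu'0 : u' ≠ 0) (hv'0 : v' ≠ 0) (huu' : u * u' = 0) (hvv' : v * v' = 0)
    (hann : ∀ x : R, x * (u + v) = 0 → x ∈ IsLocalRing.maximalIdeal R) :
    ¬ ∃ w : R, ∀ x : R, x * (u + v) = 0 ↔ x ∈ Ideal.span {w} := by
  rintro ⟨w, hw⟩
  have hdisj : Disjoint a b := disjoint_iff.2 hint
  have hw0 : w * (u + v) = 0 := (hw w).2 (mem_span_singleton_self w)
  obtain ⟨x, hx, y, hy, rfl⟩ := Submodule.mem_sup.1 (hm ▸ hann _ hw0)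
  have hu'x : u' ∈ span {x} := by
    refine mem_span_singleton_left_of_mem_span_singleton_add hdisj hx hy hu' ((hw u').1 ?_)
    rw [mul_add, mul_comm, huu', mul_eq_zero_of_mul_eq_bot hab hu' hv, add_zero]
  have hv'y : v' ∈ span {y} := by
    refine mem_span_singleton_left_of_mem_span_singleton_add hdisj.symm hy hx hv'
      (add_comm x y ▸ (hw v').1 ?_)
    rw [mul_add, mul_comm v', mul_eq_zero_of_mul_eq_bot hab hu hv', mul_comm, hvv', add_zero]
  have hxw : x ∈ span {x + y} :=
    (hw x).1 (mul_add_eq_zero_of_add_mul_add_eq_zero hab hdisj hx hy hu hv hw0)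
  rcases eq_zero_or_eq_zero_of_mem_span_singleton_add hdisj hx hy hxw with rfl | rfl
  · exact hu'0 (by simpa using hu'x)
  · exact hv'0 (by simpa using hv'y)

/-- Let `R` be local with maximal ideal `𝔪 = 𝔞 + 𝔟`, where `𝔞𝔟 = 0` and
`𝔞 ∩ 𝔟 = 0`. Suppose `u ∈ 𝔞`, `v ∈ 𝔟`, and there are nonzero `u' ∈ 𝔞`,
`v' ∈ 𝔟` with `u·u' = 0`, `v·v' = 0` and `𝔪·u' = 𝔪·v' = 0`. If every
element of `ann(u+v)` lies in `𝔪`, then `ann(u+v)` is not principal. -/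
theorem stmt13 (R : Type*) [CommRing R] [IsLocalRing R] (a b : Ideal R)
    (hab : a * b = ⊥) (hint : a ⊓ b = ⊥)
    (hm : IsLocalRing.maximalIdeal R = a ⊔ b)
    (u v u' v' : R) (hu : u ∈ a) (hv : v ∈ b) (hu' : u' ∈ a) (hv' : v' ∈ b)
    (hu'0 : u' ≠ 0) (hv'0 : v' ≠ 0) (huu' : u * u' = 0) (hvv' : v * v' = 0)
    (hsocu : ∀ m ∈ IsLocalRing.maximalIdeal R, m * u' = 0)
    (hsocv : ∀ m ∈ IsLocalRing.maximalIdeal R, m * v' = 0)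
    (hann : ∀ x : R, x * (u + v) = 0 → x ∈ IsLocalRing.maximalIdeal R) :
    ¬ ∃ w : R, ∀ x : R, x * (u + v) = 0 ↔ x ∈ Ideal.span {w} :=
  stmt13_general R a b hab hint hm u v u' v' hu hv hu' hv' hu'0 hv'0 huu' hvv' hann
end
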